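/- arXiv:1006.5064 — 3 statements merged into one kernel-verified Lean document; each statement's English description precedes it below -/
import Mathlib

section
/- Let A be a unital Banach algebra and x, y ∈ A with ‖x‖ ≤ M and ‖y‖ ≤ M for some M > 0. Then ‖exp(x+y) - exp(x)·exp(y)‖ ≤ C_M · ‖x*y - y*x‖, where C_M = ∑_{n=0}^∞ (n+1)·(n²/4)·M^{n-2} / ((⌊n/2⌋)!)² is a finite constant depending only on M. -/
/-!
Expanding into power series, `exp (x + y) - exp x * exp y = ∑ (n!)⁻¹ ((x + y)ⁿ - Qₙ)`, where
`Qₙ = ∑_{k+l=n} C(n,k) xᵏ yˡ` is the binomial expansion with every `x` moved to the left.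
Pascal's rule gives `Qₙ₊₁ = x Qₙ + Qₙ y`, so the defect `dₙ = (x + y)ⁿ - Qₙ` satisfies
`dₙ₊₁ = (x + y) dₙ + (y Qₙ - Qₙ y)`; since `‖xᵏ y - y xᵏ‖ ≤ k Mᵏ⁻¹ ‖xy - yx‖`, induction gives
`‖dₙ‖ ≤ 2ⁿ (n²/4) Mⁿ⁻² ‖xy - yx‖`. Finally `2ⁿ (⌊n/2⌋!)² ≤ (n+1) n!`, because the middle
binomial coefficient is the largest of the `n + 1` coefficients summing to `2ⁿ`.
-/

open NormedSpace Finset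
open scoped Nat

section Semiring
variable {R : Type*} [Semiring R]

def orderedBinomial (x y : R) (n : ℕ) : R :=
  ∑ kl ∈ antidiagonal n, n.choose kl.1 • (x ^ kl.1 * y ^ kl.2)

theorem orderedBinomial_succ (x y : R) (n : ℕ) :
    orderedBinomial x y (n + 1) = x * orderedBinomial x y n + orderedBinomial x y n * y := by
  rw [orderedBinomial, sum_antidiagonal_choose_succ_nsmul (fun i j => x ^ i * y ^ j), add_comm,
    orderedBinomial, mul_sum, sum_mul]
  congr 1
  · refine sum_congr rfl fun kl hkl => ?_
    rw [Nat.choose_symm_of_eq_add (mem_antidiagonal.mp hkl).symm, mul_smul_comm, pow_succ',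
      mul_assoc]
  · refine sum_congr rfl fun kl _ => ?_
    rw [smul_mul_assoc, pow_succ, mul_assoc]

end Semiring

theorem add_pow_sub_orderedBinomial_succ {R : Type*} [Ring R] (x y : R) (n : ℕ) :
    (x + y) ^ (n + 1) - orderedBinomial x y (n + 1) =
      (x + y) * ((x + y) ^ n - orderedBinomial x y n) +
        (y * orderedBinomial x y n - orderedBinomial x y n * y) := by
  rw [pow_succ', orderedBinomial_succ]
  noncomm_ring

section NormedRing
variable {R : Type*} [NormedRing R] {M : ℝ}

theorem norm_mul_pow_le_of_norm_le {y : R} (hy : ‖y‖ ≤ M) (a : R) :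
    ∀ k : ℕ, ‖a * y ^ k‖ ≤ ‖a‖ * M ^ k
  | 0 => by simp
  | k + 1 => (norm_mul_le _ _).trans <| by
      gcongr
      exact (norm_pow_le' y k.succ_pos).trans (pow_le_pow_left₀ (norm_nonneg y) hy _)

theorem norm_pow_mul_sub_mul_pow_le (hM : 0 < M) {x : R} (hx : ‖x‖ ≤ M) (y : R) :
    ∀ i : ℕ, ‖x ^ i * y - y * x ^ i‖ ≤ i * M ^ ((i : ℤ) - 1) * ‖x * y - y * x‖
  | 0 => by simp
  | i + 1 => by
    have hsplit : x ^ (i + 1) * y - y * x ^ (i + 1) =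
        x * (x ^ i * y - y * x ^ i) + (x * y - y * x) * x ^ i := by
      rw [pow_succ']; noncomm_ring
    calc ‖x ^ (i + 1) * y - y * x ^ (i + 1)‖
        ≤ M * (i * M ^ ((i : ℤ) - 1) * ‖x * y - y * x‖) + ‖x * y - y * x‖ * M ^ i := by
          rw [hsplit]
          refine (norm_add_le _ _).trans (add_le_add ?_ (norm_mul_pow_le_of_norm_le hx _ i))
          exact (norm_mul_le _ _).trans
            (mul_le_mul hx (norm_pow_mul_sub_mul_pow_le hM hx y i) (norm_nonneg _) hM.le)
      _ = (i + 1 : ℕ) * M ^ (((i + 1 : ℕ) : ℤ) - 1) * ‖x * y - y * x‖ := by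
          have hMi : M * M ^ ((i : ℤ) - 1) = M ^ i := by
            rw [← zpow_one_add₀ hM.ne', add_sub_cancel, zpow_natCast]
          push_cast
          rw [add_sub_cancel_right, zpow_natCast]
          linear_combination (i * ‖x * y - y * x‖) * hMi

theorem norm_mul_orderedBinomial_sub_le (hM : 0 < M) {x y : R} (hx : ‖x‖ ≤ M) (hy : ‖y‖ ≤ M)
    (n : ℕ) :
    ‖y * orderedBinomial x y n - orderedBinomial x y n * y‖ ≤
      n * 2 ^ n * M ^ ((n : ℤ) - 1) * ‖x * y - y * x‖ := by
  have hexpand : y * orderedBinomial x y n - orderedBinomial x y n * y =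
      ∑ kl ∈ antidiagonal n, n.choose kl.1 • ((y * x ^ kl.1 - x ^ kl.1 * y) * y ^ kl.2) := by
    rw [orderedBinomial, mul_sum, sum_mul, ← sum_sub_distrib]
    refine sum_congr rfl fun kl _ => ?_
    rw [mul_smul_comm, smul_mul_assoc, ← smul_sub, mul_assoc _ (y ^ kl.2), ← pow_succ,
      pow_succ']
    noncomm_ring
  have hterm : ∀ kl ∈ antidiagonal n, ‖(y * x ^ kl.1 - x ^ kl.1 * y) * y ^ kl.2‖ ≤
      n * M ^ ((n : ℤ) - 1) * ‖x * y - y * x‖ := by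
    intro kl hkl
    have hpow : M ^ ((kl.1 : ℤ) - 1) * M ^ kl.2 = M ^ ((n : ℤ) - 1) := by
      rw [← zpow_natCast, ← zpow_add₀ hM.ne', ← mem_antidiagonal.mp hkl]
      push_cast
      ring_nf
    have hk : (kl.1 : ℝ) ≤ n := by
      have := mem_antidiagonal.mp hkl
      exact_mod_cast (by omega : kl.1 ≤ n)
    calc ‖(y * x ^ kl.1 - x ^ kl.1 * y) * y ^ kl.2‖
        ≤ kl.1 * M ^ ((kl.1 : ℤ) - 1) * ‖x * y - y * x‖ * M ^ kl.2 := by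
          refine (norm_mul_pow_le_of_norm_le hy _ _).trans ?_
          rw [norm_sub_rev]
          gcongr
          exact norm_pow_mul_sub_mul_pow_le hM hx y kl.1
      _ = kl.1 * M ^ ((n : ℤ) - 1) * ‖x * y - y * x‖ := by rw [← hpow]; ring
      _ ≤ n * M ^ ((n : ℤ) - 1) * ‖x * y - y * x‖ := by gcongr
  have hchoose : ∑ kl ∈ antidiagonal n, (n.choose kl.1 : ℝ) = 2 ^ n := by
    rw [Nat.sum_antidiagonal_eq_sum_range_succ_mk]
    exact_mod_cast Nat.sum_range_choose n
  calc ‖y * orderedBinomial x y n - orderedBinomial x y n * y‖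
      ≤ ∑ kl ∈ antidiagonal n, (n.choose kl.1 : ℝ) * (n * M ^ ((n : ℤ) - 1) * ‖x * y - y * x‖) := by
        rw [hexpand]
        refine (norm_sum_le _ _).trans (sum_le_sum fun kl hkl => ?_)
        exact norm_nsmul_le.trans (by gcongr; exact hterm kl hkl)
    _ = n * 2 ^ n * M ^ ((n : ℤ) - 1) * ‖x * y - y * x‖ := by
        rw [← sum_mul, hchoose]
        ring

theorem norm_add_pow_sub_orderedBinomial_le (hM : 0 < M) {x y : R} (hx : ‖x‖ ≤ M)
    (hy : ‖y‖ ≤ M) :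
    ∀ n : ℕ, ‖(x + y) ^ n - orderedBinomial x y n‖ ≤
      2 ^ n * ((n : ℝ) ^ 2 / 4) * M ^ ((n : ℤ) - 2) * ‖x * y - y * x‖
  | 0 => by simp [orderedBinomial]
  | n + 1 => by
    have hMn : M * M ^ ((n : ℤ) - 2) = M ^ ((n : ℤ) - 1) := by
      rw [← zpow_one_add₀ hM.ne']; ring_nf
    calc ‖(x + y) ^ (n + 1) - orderedBinomial x y (n + 1)‖
        ≤ 2 * M * (2 ^ n * ((n : ℝ) ^ 2 / 4) * M ^ ((n : ℤ) - 2) * ‖x * y - y * x‖) +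
            n * 2 ^ n * M ^ ((n : ℤ) - 1) * ‖x * y - y * x‖ := by
          rw [add_pow_sub_orderedBinomial_succ]
          refine (norm_add_le _ _).trans
            (add_le_add ?_ (norm_mul_orderedBinomial_sub_le hM hx hy n))
          refine (norm_mul_le _ _).trans (mul_le_mul ?_
            (norm_add_pow_sub_orderedBinomial_le hM hx hy n) (norm_nonneg _) (by positivity))
          exact (norm_add_le x y).trans (by linarith)
      _ = 2 ^ (n + 1) * (((n : ℝ) ^ 2 + 2 * n) / 4) * M ^ ((n : ℤ) - 1) *
            ‖x * y - y * x‖ := by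
          rw [← hMn]; ring
      _ ≤ 2 ^ (n + 1) * (((n + 1 : ℕ) : ℝ) ^ 2 / 4) * M ^ (((n + 1 : ℕ) : ℤ) - 2) *
            ‖x * y - y * x‖ := by
          push_cast
          rw [show (n : ℤ) + 1 - 2 = n - 1 by ring]
          gcongr
          nlinarith

end NormedRing

theorem inv_factorial_smul_orderedBinomial {𝕂 A : Type*} [Field 𝕂] [CharZero 𝕂] [Ring A]
    [Algebra 𝕂 A] (x y : A) (n : ℕ) :
    (n !⁻¹ : 𝕂) • orderedBinomial x y n =
      ∑ kl ∈ antidiagonal n, ((kl.1 !⁻¹ : 𝕂) • x ^ kl.1) * ((kl.2 !⁻¹ : 𝕂) • y ^ kl.2) := by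
  rw [orderedBinomial, smul_sum]
  refine sum_congr rfl fun kl hkl => ?_
  rw [← Nat.cast_smul_eq_nsmul 𝕂, smul_smul, smul_mul_smul_comm, ← mem_antidiagonal.mp hkl,
    Nat.cast_add_choose, mem_antidiagonal.mp hkl]
  field_simp [n.factorial_ne_zero]

theorem hasSum_exp_add_sub_exp_mul_exp (𝕂 : Type*) {A : Type*} [NontriviallyNormedField 𝕂]
    [CharZero 𝕂] [ContinuousSMul ℚ 𝕂] [NormedRing A] [NormedAlgebra 𝕂 A] [CompleteSpace A]
    (x y : A) :
    HasSum (fun n => (n !⁻¹ : 𝕂) • ((x + y) ^ n - orderedBinomial x y n))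
      (exp (x + y) - exp x * exp y) := by
  have hx := norm_expSeries_summable' (𝕂 := 𝕂) x
  have hy := norm_expSeries_summable' (𝕂 := 𝕂) y
  have hcauchy : exp x * exp y = ∑' n, ∑ kl ∈ antidiagonal n,
      ((kl.1 !⁻¹ : 𝕂) • x ^ kl.1) * ((kl.2 !⁻¹ : 𝕂) • y ^ kl.2) := by
    rw [← (exp_series_hasSum_exp' (𝕂 := 𝕂) x).tsum_eq,
      ← (exp_series_hasSum_exp' (𝕂 := 𝕂) y).tsum_eq]
    exact tsum_mul_tsum_eq_tsum_sum_antidiagonal_of_summable_norm hx hy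
  have hprod := (summable_norm_sum_mul_antidiagonal_of_summable_norm hx hy).of_norm.hasSum
  rw [← hcauchy] at hprod
  simpa only [smul_sub, inv_factorial_smul_orderedBinomial] using
    (exp_series_hasSum_exp' (𝕂 := 𝕂) (x + y)).sub hprod

namespace Nat

theorem factorial_le_two_pow_mul_succ_mul_factorial_half_sq (n : ℕ) :
    n ! ≤ 2 ^ n * (n + 1) * (n / 2)! ^ 2 := by
  have hceil : (n - n / 2)! ≤ (n + 1) * (n / 2)! :=
    calc (n - n / 2)! ≤ (n / 2 + 1)! := factorial_le (by omega)
      _ = (n / 2 + 1) * (n / 2)! := factorial_succ _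
      _ ≤ (n + 1) * (n / 2)! := Nat.mul_le_mul_right _ (by omega)
  calc n ! = n.choose (n / 2) * (n / 2)! * (n - n / 2)! :=
        (choose_mul_factorial_mul_factorial (div_le_self n 2)).symm
    _ ≤ 2 ^ n * (n / 2)! * ((n + 1) * (n / 2)!) := by
        gcongr
        exact choose_le_two_pow n _
    _ = 2 ^ n * (n + 1) * (n / 2)! ^ 2 := by ring

theorem two_pow_mul_factorial_half_sq_le_succ_mul_factorial (n : ℕ) :
    2 ^ n * (n / 2)! ^ 2 ≤ (n + 1) * n ! := by
  have hmiddle : 2 ^ n ≤ (n + 1) * n.choose (n / 2) := by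
    calc 2 ^ n = ∑ i ∈ range (n + 1), n.choose i := (sum_range_choose n).symm
      _ ≤ ∑ _i ∈ range (n + 1), n.choose (n / 2) := sum_le_sum fun i _ => choose_le_middle i n
      _ = (n + 1) * n.choose (n / 2) := by simp
  calc 2 ^ n * (n / 2)! ^ 2 ≤ (n + 1) * n.choose (n / 2) * ((n / 2)! * (n - n / 2)!) := by
        rw [sq]
        gcongr
        omega
    _ = (n + 1) * n ! := by
        rw [← choose_mul_factorial_mul_factorial (div_le_self n 2)]
        ring

end Nat

noncomputable def expCommutatorCoeff (M : ℝ) (n : ℕ) : ℝ :=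
  ((n : ℝ) + 1) * ((n : ℝ) ^ 2 / 4) * M ^ ((n : ℤ) - 2) / ((Nat.factorial (n / 2) : ℝ)) ^ 2

theorem expCommutatorCoeff_nonneg {M : ℝ} (hM : 0 < M) (n : ℕ) : 0 ≤ expCommutatorCoeff M n := by
  unfold expCommutatorCoeff
  positivity

theorem summable_expCommutatorCoeff {M : ℝ} (hM : 0 < M) : Summable (expCommutatorCoeff M) := by
  refine .of_nonneg_of_le (expCommutatorCoeff_nonneg hM) (fun n => ?_)
    ((Real.summable_pow_div_factorial (32 * M)).mul_left (4 * M ^ 2)⁻¹)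
  have hfac : (n ! : ℝ) / 2 ^ n ≤ (n + 1) * (n / 2)! ^ 2 := by
    rw [div_le_iff₀ (by positivity)]
    exact_mod_cast (Nat.factorial_le_two_pow_mul_succ_mul_factorial_half_sq n).trans_eq (by ring)
  have hpoly : (((n : ℝ) + 1) * n) ^ 2 ≤ 16 ^ n := by
    have h1 : (n : ℝ) + 1 ≤ 2 ^ n := by exact_mod_cast n.lt_two_pow_self
    have h2 : (n : ℝ) ≤ 2 ^ n := by linarith
    calc (((n : ℝ) + 1) * n) ^ 2 ≤ (2 ^ n * 2 ^ n) ^ 2 := by gcongr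
      _ = 16 ^ n := by rw [← pow_two, ← pow_mul, ← pow_mul, pow_mul']; norm_num
  calc expCommutatorCoeff M n
      = ((n + 1) * n) ^ 2 / (4 * M ^ 2) * (M ^ n / ((n + 1) * (n / 2)! ^ 2)) := by
        rw [expCommutatorCoeff, zpow_sub₀ hM.ne', zpow_natCast]
        field_simp
    _ ≤ 16 ^ n / (4 * M ^ 2) * (M ^ n / (n ! / 2 ^ n)) := by gcongr
    _ = (4 * M ^ 2)⁻¹ * ((32 * M) ^ n / n !) := by
        rw [show (32 : ℝ) = 16 * 2 by norm_num, mul_pow, mul_pow]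
        field_simp

theorem norm_inv_factorial_smul_add_pow_sub_orderedBinomial_le {A : Type*} [NormedRing A]
    [NormedSpace ℝ A] {M : ℝ} (hM : 0 < M) {x y : A} (hx : ‖x‖ ≤ M) (hy : ‖y‖ ≤ M) (n : ℕ) :
    ‖(n !⁻¹ : ℝ) • ((x + y) ^ n - orderedBinomial x y n)‖ ≤
      expCommutatorCoeff M n * ‖x * y - y * x‖ := by
  have hfac : (n ! : ℝ)⁻¹ * 2 ^ n ≤ (n + 1) / (n / 2)! ^ 2 := by
    rw [inv_mul_le_iff₀ (by positivity), mul_div_assoc', le_div_iff₀ (by positivity)]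
    exact_mod_cast (Nat.two_pow_mul_factorial_half_sq_le_succ_mul_factorial n).trans_eq (by ring)
  calc ‖(n !⁻¹ : ℝ) • ((x + y) ^ n - orderedBinomial x y n)‖
      = (n ! : ℝ)⁻¹ * ‖(x + y) ^ n - orderedBinomial x y n‖ := by
        rw [norm_smul, Real.norm_of_nonneg (by positivity)]
    _ ≤ (n ! : ℝ)⁻¹ * (2 ^ n * ((n : ℝ) ^ 2 / 4) * M ^ ((n : ℤ) - 2) * ‖x * y - y * x‖) := by
        gcongr
        exact norm_add_pow_sub_orderedBinomial_le hM hx hy n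
    _ = (n ! : ℝ)⁻¹ * 2 ^ n * ((n : ℝ) ^ 2 / 4 * M ^ ((n : ℤ) - 2) * ‖x * y - y * x‖) := by
        ring
    _ ≤ (n + 1) / (n / 2)! ^ 2 * ((n : ℝ) ^ 2 / 4 * M ^ ((n : ℤ) - 2) * ‖x * y - y * x‖) := by
        gcongr
    _ = expCommutatorCoeff M n * ‖x * y - y * x‖ := by
        rw [expCommutatorCoeff]
        ring

/-- For `x, y` in a unital Banach algebra with `‖x‖, ‖y‖ ≤ M`,
`‖exp(x+y) - exp x · exp y‖ ≤ C_M · ‖xy - yx‖` where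
`C_M = ∑_{n=0}^∞ (n+1)·(n²/4)·M^{n-2} / ((⌊n/2⌋)!)²`. -/
theorem exp_sum_sub_exp_mul_exp_norm_le {A : Type*} [NormedRing A] [NormedAlgebra ℝ A]
    [CompleteSpace A] (M : ℝ) (hM : 0 < M) (x y : A) (hx : ‖x‖ ≤ M) (hy : ‖y‖ ≤ M) :
    ‖exp (x + y) - exp x * exp y‖ ≤
      (∑' n : ℕ, ((n : ℝ) + 1) * ((n : ℝ) ^ 2 / 4) * M ^ ((n : ℤ) - 2) /
        ((Nat.factorial (n / 2) : ℝ)) ^ 2) * ‖x * y - y * x‖ :=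
  (hasSum_exp_add_sub_exp_mul_exp ℝ x y).norm_le_of_bounded
    ((summable_expCommutatorCoeff hM).hasSum.mul_right _)
    (norm_inv_factorial_smul_add_pow_sub_orderedBinomial_le hM hx hy)
end

section
/- Let A be a unital Banach algebra and let (x_t) and (y_t), for t ∈ [1,∞), be continuous paths of elements of A that are uniformly bounded in norm, and suppose that the commutator [x_t, y_t] = x_t y_t - y_t x_t tends to 0 in norm as t → ∞. Then ‖exp(x_t + y_t) - exp(x_t)·exp(y_t)‖ → 0 as t → ∞. -/
/-!
For `f s = exp (s • a) * exp (s • b) * exp (-s • (a + b))` the derivative is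
`exp (s • a) * [a, exp (s • b)] * exp (-s • (a + b))`. The commutator `[a, exp b]` is in turn
controlled by `[a, b]`: the derivative of `s ↦ exp (-s • b) * a * exp (s • b)` is
`exp (-s • b) * [a, b] * exp (s • b)`. Two applications of the mean value inequality give
`‖exp (a + b) - exp a * exp b‖ ≤ C(M) * ‖[a, b]‖` whenever `‖a‖ + ‖b‖ ≤ M`, so under a uniform
bound the decay of the commutator passes to the left-hand side.
-/

open NormedSpace Filter

section

variable {A : Type*} [NormedRing A]

-- `max ‖1‖ 1` replaces `‖1‖`, which need not be `1` in a `NormedRing`.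

lemma norm_pow_le_max_norm_one_mul (u : A) (n : ℕ) : ‖u ^ n‖ ≤ max ‖(1 : A)‖ 1 * ‖u‖ ^ n := by
  cases n with
  | zero => simp
  | succ n =>
    exact (norm_pow_le' u n.succ_pos).trans
      (le_mul_of_one_le_left (by positivity) (le_max_right _ _))

variable [NormedAlgebra ℝ A]

lemma norm_exp_le_max_norm_one_mul_exp (u : A) : ‖exp u‖ ≤ max ‖(1 : A)‖ 1 * Real.exp ‖u‖ := by
  have hsum := Real.summable_pow_div_factorial ‖u‖
  rw [exp_eq_tsum ℝ, Real.exp_eq_exp_ℝ, exp_eq_tsum_div, ← tsum_mul_left]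
  refine (norm_tsum_le_tsum_norm (norm_expSeries_summable' u)).trans <|
    (norm_expSeries_summable' u).tsum_le_tsum (fun n => ?_) (hsum.mul_left _)
  rw [norm_smul, norm_inv, RCLike.norm_natCast, mul_div_assoc', mul_comm, div_eq_mul_inv]
  gcongr
  exact norm_pow_le_max_norm_one_mul u n

lemma norm_exp_smul_le {s : ℝ} (hs : s ∈ Set.Icc 0 1) {u : A} {M : ℝ} (hu : ‖u‖ ≤ M) :
    ‖exp (s • u)‖ ≤ max ‖(1 : A)‖ 1 * Real.exp M := by
  refine (norm_exp_le_max_norm_one_mul_exp _).trans ?_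
  gcongr
  rw [norm_smul, Real.norm_of_nonneg hs.1]
  nlinarith [hs.2, norm_nonneg u]

variable [CompleteSpace A]

lemma exp_mul_exp_neg (u : A) : exp u * exp (-u) = 1 := by
  have hball (v : A) : v ∈ Metric.eball (0 : A) (expSeries ℝ A).radius :=
    (expSeries_radius_eq_top ℝ A).symm ▸ edist_lt_top _ _
  rw [← exp_add_of_commute_of_mem_ball (Commute.refl u).neg_right (hball u) (hball _),
    add_neg_cancel, exp_zero]

lemma norm_exp_neg_mul_mul_exp_sub_le (a b : A) {M : ℝ} (hb : ‖b‖ ≤ M) :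
    ‖exp (-b) * a * exp b - a‖ ≤ (max ‖(1 : A)‖ 1 * Real.exp M) ^ 2 * ‖a * b - b * a‖ := by
  set f : ℝ → A := fun s => exp (s • -b) * a * exp (s • b)
  have hf (s : ℝ) : HasDerivAt f (exp (s • -b) * (a * b - b * a) * exp (s • b)) s := by
    refine (((hasDerivAt_exp_smul_const (-b) s).mul_const a).mul
      (hasDerivAt_exp_smul_const' (𝕂 := ℝ) b s)).congr_deriv ?_
    noncomm_ring
  have hbound : ∀ s ∈ Set.Ico (0 : ℝ) 1,
      ‖exp (s • -b) * (a * b - b * a) * exp (s • b)‖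
        ≤ (max ‖(1 : A)‖ 1 * Real.exp M) ^ 2 * ‖a * b - b * a‖ := fun s hs => by
    have hs' := Set.Ico_subset_Icc_self hs
    calc _ ≤ ‖exp (s • -b)‖ * ‖a * b - b * a‖ * ‖exp (s • b)‖ := norm_mul₃_le
      _ ≤ max ‖(1 : A)‖ 1 * Real.exp M * ‖a * b - b * a‖ * (max ‖(1 : A)‖ 1 * Real.exp M) := by
        gcongr
        · exact norm_exp_smul_le hs' (by rwa [norm_neg])
        · exact norm_exp_smul_le hs' hb
      _ = _ := by ring
  simpa [f] using norm_image_sub_le_of_norm_deriv_le_segment_01'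
    (fun s _ => (hf s).hasDerivWithinAt) hbound

lemma norm_mul_exp_sub_exp_mul_le (a b : A) {M : ℝ} (hb : ‖b‖ ≤ M) :
    ‖a * exp b - exp b * a‖ ≤ (max ‖(1 : A)‖ 1 * Real.exp M) ^ 3 * ‖a * b - b * a‖ := by
  have hexp : ‖exp b‖ ≤ max ‖(1 : A)‖ 1 * Real.exp M := by
    simpa using norm_exp_smul_le (s := 1) (by simp) hb
  have hconj : a * exp b - exp b * a = exp b * (exp (-b) * a * exp b - a) := by
    rw [mul_sub, ← mul_assoc, ← mul_assoc, exp_mul_exp_neg, one_mul]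
  calc ‖a * exp b - exp b * a‖ ≤ ‖exp b‖ * ‖exp (-b) * a * exp b - a‖ :=
        hconj ▸ norm_mul_le _ _
    _ ≤ max ‖(1 : A)‖ 1 * Real.exp M *
          ((max ‖(1 : A)‖ 1 * Real.exp M) ^ 2 * ‖a * b - b * a‖) := by
        gcongr
        exact norm_exp_neg_mul_mul_exp_sub_le a b hb
    _ = _ := by ring

lemma norm_exp_mul_exp_mul_exp_neg_add_sub_one_le (a b : A) {M : ℝ} (hab : ‖a‖ + ‖b‖ ≤ M) :
    ‖exp a * exp b * exp (-(a + b)) - 1‖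
      ≤ (max ‖(1 : A)‖ 1 * Real.exp M) ^ 5 * ‖a * b - b * a‖ := by
  set E := max ‖(1 : A)‖ 1 * Real.exp M
  have ha : ‖a‖ ≤ M := by linarith [norm_nonneg b]
  have hb : ‖b‖ ≤ M := by linarith [norm_nonneg a]
  have hsum : ‖-(a + b)‖ ≤ M := by rw [norm_neg]; exact (norm_add_le a b).trans hab
  set f : ℝ → A := fun s => exp (s • a) * exp (s • b) * exp (s • -(a + b))
  have hf (s : ℝ) : HasDerivAt f
      (exp (s • a) * (a * exp (s • b) - exp (s • b) * a) * exp (s • -(a + b))) s := by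
    refine (((hasDerivAt_exp_smul_const a s).mul (hasDerivAt_exp_smul_const (𝕂 := ℝ) b s)).mul
      (hasDerivAt_exp_smul_const' (𝕂 := ℝ) (-(a + b)) s)).congr_deriv ?_
    simp only [Pi.mul_apply]
    noncomm_ring
  have hbound : ∀ s ∈ Set.Ico (0 : ℝ) 1,
      ‖exp (s • a) * (a * exp (s • b) - exp (s • b) * a) * exp (s • -(a + b))‖
        ≤ E ^ 5 * ‖a * b - b * a‖ := fun s hs => by
    have hs' := Set.Ico_subset_Icc_self hs
    have hsb : ‖s • b‖ ≤ M := by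
      rw [norm_smul, Real.norm_of_nonneg hs'.1]
      nlinarith [hs'.2, norm_nonneg b]
    have hcomm : ‖a * (s • b) - s • b * a‖ ≤ ‖a * b - b * a‖ := by
      rw [mul_smul_comm, smul_mul_assoc, ← smul_sub, norm_smul, Real.norm_of_nonneg hs'.1]
      exact mul_le_of_le_one_left (norm_nonneg _) hs'.2
    calc _ ≤ ‖exp (s • a)‖ * ‖a * exp (s • b) - exp (s • b) * a‖ * ‖exp (s • -(a + b))‖ :=
          norm_mul₃_le
      _ ≤ E * (E ^ 3 * ‖a * b - b * a‖) * E := by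
        gcongr
        · exact norm_exp_smul_le hs' ha
        · exact (norm_mul_exp_sub_exp_mul_le a (s • b) hsb).trans (by gcongr)
        · exact norm_exp_smul_le hs' hsum
      _ = _ := by ring
  simpa [f] using norm_image_sub_le_of_norm_deriv_le_segment_01'
    (fun s _ => (hf s).hasDerivWithinAt) hbound

lemma norm_exp_add_sub_exp_mul_exp_le (a b : A) {M : ℝ} (hab : ‖a‖ + ‖b‖ ≤ M) :
    ‖exp (a + b) - exp a * exp b‖ ≤ (max ‖(1 : A)‖ 1 * Real.exp M) ^ 6 * ‖a * b - b * a‖ := by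
  have hinv : exp (-(a + b)) * exp (a + b) = 1 := by simpa using exp_mul_exp_neg (-(a + b))
  have hfactor :
      exp a * exp b - exp (a + b) = (exp a * exp b * exp (-(a + b)) - 1) * exp (a + b) := by
    rw [sub_mul, one_mul, mul_assoc, hinv, mul_one]
  calc ‖exp (a + b) - exp a * exp b‖
      ≤ ‖exp a * exp b * exp (-(a + b)) - 1‖ * ‖exp (a + b)‖ := by
        rw [norm_sub_rev, hfactor]; exact norm_mul_le _ _
    _ ≤ (max ‖(1 : A)‖ 1 * Real.exp M) ^ 5 * ‖a * b - b * a‖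
          * (max ‖(1 : A)‖ 1 * Real.exp M) := by
        gcongr
        · exact norm_exp_mul_exp_mul_exp_neg_add_sub_one_le a b hab
        · simpa using norm_exp_smul_le (s := 1) (by simp) ((norm_add_le a b).trans hab)
    _ = _ := by ring

end

theorem exp_sum_sub_exp_mul_exp_tendsto_zero_general {A : Type*} [NormedRing A] [NormedAlgebra ℝ A]
    [CompleteSpace A] (x y : ℝ → A)
    (hbdd : ∃ M > 0, ∀ t ∈ Set.Ici (1 : ℝ), ‖x t‖ ≤ M ∧ ‖y t‖ ≤ M)
    (hcomm : Tendsto (fun t => x t * y t - y t * x t) atTop (nhds 0)) :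
    Tendsto (fun t => ‖exp (x t + y t) - exp (x t) * exp (y t)‖) atTop (nhds 0) := by
  obtain ⟨M, -, hM⟩ := hbdd
  have hbound : ∀ᶠ t in atTop, ‖exp (x t + y t) - exp (x t) * exp (y t)‖
      ≤ (max ‖(1 : A)‖ 1 * Real.exp (2 * M)) ^ 6 * ‖x t * y t - y t * x t‖ := by
    filter_upwards [eventually_ge_atTop 1] with t ht
    exact norm_exp_add_sub_exp_mul_exp_le _ _ (by linarith [hM t ht])
  refine squeeze_zero' (.of_forall fun t => norm_nonneg _) hbound ?_
  simpa using hcomm.norm.const_mul _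

/-- If `x_t`, `y_t` are uniformly bounded continuous paths in a unital Banach algebra whose
commutator tends to zero, then `‖exp(x_t + y_t) - exp(x_t)·exp(y_t)‖ → 0`. -/
theorem exp_sum_sub_exp_mul_exp_tendsto_zero {A : Type*} [NormedRing A] [NormedAlgebra ℝ A]
    [CompleteSpace A] (x y : ℝ → A)
    (hx : ContinuousOn x (Set.Ici 1)) (hy : ContinuousOn y (Set.Ici 1))
    (hbdd : ∃ M > 0, ∀ t ∈ Set.Ici (1 : ℝ), ‖x t‖ ≤ M ∧ ‖y t‖ ≤ M)
    (hcomm : Tendsto (fun t => x t * y t - y t * x t) atTop (nhds 0)) :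
    Tendsto (fun t => ‖exp (x t + y t) - exp (x t) * exp (y t)‖) atTop (nhds 0) :=
  exp_sum_sub_exp_mul_exp_tendsto_zero_general x y hbdd hcomm
end

section
/- Let D and D' be self-adjoint operators on a Hilbert space with a common core C for D, D', and D+D', such that the commutator [D,D'] defined on C extends to a bounded operator. Then for every c in the image of the core under (D+D'+i), ‖D·(D+D'+i)⁻¹c‖² ≤ (1 + ‖[D,D']‖)·‖c‖²; hence D·(D+D'+i)⁻¹ extends to a bounded operator of norm at most √(1 + ‖[D,D']‖). -/
/-!
With `S = D + D'` self-adjoint and `T = S + i`, one has `T⋆T = S² + 1`. Since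
`S² = D² + D'² + (DD' + D'D)` and `D'² ≥ 0`, `DD' + D'D ≥ -‖DD' + D'D‖`, we get
`D² ≤ S² + ‖DD' + D'D‖ ≤ (1 + ‖DD' + D'D‖)·T⋆T`. Conjugating by `R`, where `TR = 1`, gives
`(DR)⋆(DR) ≤ 1 + ‖DD' + D'D‖`, and the C⋆-identity turns this into the norm bound.
-/

lemma IsSelfAdjoint.star_add_I_smul_one_mul_self {A : Type*} [Ring A] [StarRing A] [Algebra ℂ A]
    [StarModule ℂ A] {S : A} (hS : IsSelfAdjoint S) :
    star (S + Complex.I • (1 : A)) * (S + Complex.I • (1 : A)) = S ^ 2 + 1 := by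
  rw [star_add, hS.star_eq, star_smul, star_one, Complex.star_def, Complex.conj_I, neg_smul,
    ← sub_eq_add_neg, sub_mul, mul_add, mul_add, smul_mul_smul, mul_smul_one, smul_one_mul,
    Complex.I_mul_I, neg_one_smul, mul_one, sq]
  abel

section StarOrdered

variable {A : Type*} [CStarAlgebra A] [PartialOrder A] [StarOrderedRing A]

lemma IsSelfAdjoint.sq_le_sq_add_add_algebraMap_norm {D D' : A} (hD : IsSelfAdjoint D)
    (hD' : IsSelfAdjoint D') :
    D ^ 2 ≤ (D + D') ^ 2 + algebraMap ℝ A ‖D * D' + D' * D‖ := by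
  have hX : IsSelfAdjoint (D * D' + D' * D) := by
    rw [IsSelfAdjoint, star_add, star_mul, star_mul, hD.star_eq, hD'.star_eq, add_comm]
  have hD'sq : 0 ≤ D' ^ 2 := by simpa only [hD'.star_eq, sq] using star_mul_self_nonneg D'
  have hexpand : (D + D') ^ 2 = D ^ 2 + D' ^ 2 + (D * D' + D' * D) := by noncomm_ring
  have hXlower := hX.neg_algebraMap_norm_le_self
  rw [hexpand]
  calc D ^ 2 ≤ D ^ 2 + D' ^ 2 := le_add_of_nonneg_right hD'sq
    _ = D ^ 2 + D' ^ 2 + -algebraMap ℝ A ‖D * D' + D' * D‖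
          + algebraMap ℝ A ‖D * D' + D' * D‖ := by abel
    _ ≤ _ := by gcongr

lemma add_algebraMap_le_smul_add_one {P : A} (hP : 0 ≤ P) {r : ℝ} (hr : 0 ≤ r) :
    P + algebraMap ℝ A r ≤ (1 + r) • (P + 1) := by
  have hexpand : (1 + r) • (P + 1) = P + algebraMap ℝ A r + (r • P + 1) := by
    rw [Algebra.algebraMap_eq_smul_one, add_smul, one_smul, smul_add]
    abel
  rw [hexpand]
  exact le_add_of_nonneg_right (add_nonneg (smul_nonneg hr hP) zero_le_one)

lemma IsSelfAdjoint.sq_le_smul_star_mul_self {D D' : A} (hD : IsSelfAdjoint D)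
    (hD' : IsSelfAdjoint D') :
    D ^ 2 ≤ (1 + ‖D * D' + D' * D‖) •
      (star (D + D' + Complex.I • (1 : A)) * (D + D' + Complex.I • (1 : A))) := by
  rw [(hD.add hD').star_add_I_smul_one_mul_self]
  have hSsq : 0 ≤ (D + D') ^ 2 := by
    simpa only [(hD.add hD').star_eq, sq] using star_mul_self_nonneg (D + D')
  exact (hD.sq_le_sq_add_add_algebraMap_norm hD').trans
    (add_algebraMap_le_smul_add_one hSsq (norm_nonneg _))

lemma norm_mul_sq_le_of_star_mul_self_le {a b x : A} {r : ℝ} (hr : 0 ≤ r)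
    (hab : star a * a ≤ r • (star b * b)) (hbx : b * x = 1) : ‖a * x‖ ^ 2 ≤ r := by
  have hconj : star (a * x) * (a * x) ≤ algebraMap ℝ A r := by
    calc star (a * x) * (a * x) = star x * (star a * a) * x := by
          simp only [star_mul, mul_assoc]
      _ ≤ star x * (r • (star b * b)) * x := star_left_conjugate_le_conjugate hab x
      _ = r • (star (b * x) * (b * x)) := by
          simp only [star_mul, mul_smul_comm, smul_mul_assoc, mul_assoc]
      _ = algebraMap ℝ A r := by rw [hbx, star_one, mul_one, Algebra.algebraMap_eq_smul_one]
  rw [sq, ← CStarRing.norm_star_mul_self]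
  exact (CStarAlgebra.norm_le_iff_le_algebraMap _ hr (star_mul_self_nonneg _)).mpr hconj

end StarOrdered

theorem D_mul_resolvent_bounded_general {A : Type*} [CStarAlgebra A]
    (D D' : A) (hD : IsSelfAdjoint D) (hD' : IsSelfAdjoint D')
    (R : A)
    (hR' : (D + D' + Complex.I • (1 : A)) * R = 1) :
    (∀ c : A, ‖D * R * c‖ ^ 2 ≤ (1 + ‖D * D' + D' * D‖) * ‖c‖ ^ 2) ∧
    ‖D * R‖ ≤ Real.sqrt (1 + ‖D * D' + D' * D‖) := by
  let _ := CStarAlgebra.spectralOrder A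
  have := CStarAlgebra.spectralOrderedRing A
  have hbound : star D * D ≤ (1 + ‖D * D' + D' * D‖) •
      (star (D + D' + Complex.I • (1 : A)) * (D + D' + Complex.I • (1 : A))) := by
    rw [hD.star_eq, ← sq]
    exact hD.sq_le_smul_star_mul_self hD'
  have hDR : ‖D * R‖ ^ 2 ≤ 1 + ‖D * D' + D' * D‖ :=
    norm_mul_sq_le_of_star_mul_self_le (by positivity) hbound hR'
  refine ⟨fun c => ?_, Real.le_sqrt_of_sq_le hDR⟩
  calc ‖D * R * c‖ ^ 2 ≤ (‖D * R‖ * ‖c‖) ^ 2 := by gcongr; exact norm_mul_le _ _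
    _ = ‖D * R‖ ^ 2 * ‖c‖ ^ 2 := mul_pow _ _ _
    _ ≤ (1 + ‖D * D' + D' * D‖) * ‖c‖ ^ 2 := by gcongr

/-- For self-adjoint `D, D'` in a unital C*-algebra whose (anti)commutator
`[D,D'] = DD' + D'D` is bounded, if `R` is the inverse of `D + D' + i`, then for every
`c`, `‖D·R·c‖² ≤ (1 + ‖[D,D']‖)·‖c‖²`, and hence
`‖D·R‖ ≤ √(1 + ‖[D,D']‖)`. -/
theorem D_mul_resolvent_bounded {A : Type*} [CStarAlgebra A]
    (D D' : A) (hD : IsSelfAdjoint D) (hD' : IsSelfAdjoint D')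
    (R : A)
    (hR : R * (D + D' + Complex.I • (1 : A)) = 1)
    (hR' : (D + D' + Complex.I • (1 : A)) * R = 1) :
    (∀ c : A, ‖D * R * c‖ ^ 2 ≤ (1 + ‖D * D' + D' * D‖) * ‖c‖ ^ 2) ∧
    ‖D * R‖ ≤ Real.sqrt (1 + ‖D * D' + D' * D‖) :=
  D_mul_resolvent_bounded_general D D' hD hD' R hR'
end
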